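/- Let n ≥ 1 and let a, a′, b, b′ be Hermitian n×n complex matrices with a² = a′² = b² = b′² = 1 (the identity matrix), such that each of a, a′ commutes with each of b, b′. Let W be a positive semidefinite n×n complex matrix with trace 1. Then |Tr(W(ab + ab′ + a′b − a′b′))| ≤ 2√2 (the Cirel'son bound). -/

import Mathlib

open Matrix ComplexOrder

/-!
Put `C = ab + ab' + a'b - a'b'`. Expanding with `a² = a'² = b² = b'² = 1` and the commutation
relations gives the sum-of-squares identity
`(√2 a - b - b')² + (√2 a' - b + b')² = 8 - 2√2 C`,
and both squares are positive semidefinite, so `C ≤ 2√2` in the Loewner order; replacing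
`a, a'` by `-a, -a'` gives `-C ≤ 2√2`. Pairing with the state `W` turns the two operator
inequalities into `|Tr(WC)| ≤ 2√2 Tr W`.
-/

def bellOperator {R : Type*} [Ring R] (a a' b b' : R) : R :=
  a * b + a * b' + a' * b - a' * b'

theorem bellOperator_neg_left {R : Type*} [Ring R] (a a' b b' : R) :
    bellOperator (-a) (-a') b b' = -bellOperator a a' b b' := by
  simp only [bellOperator]
  noncomm_ring

theorem sum_sq_eq_sub_bellOperator {k R : Type*} [CommRing k] [Ring R] [Algebra k R] (s : k)
    {a a' b b' : R} (ha : a * a = 1) (ha' : a' * a' = 1) (hb : b * b = 1) (hb' : b' * b' = 1)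
    (hab : Commute a b) (hab' : Commute a b') (ha'b : Commute a' b) (ha'b' : Commute a' b') :
    (s • a - b - b') * (s • a - b - b') + (s • a' - b + b') * (s • a' - b + b') =
      (2 * s ^ 2 + 4) • 1 - (2 * s) • bellOperator a a' b b' := by
  simp only [bellOperator, mul_add, add_mul, mul_sub, sub_mul, smul_mul_assoc, mul_smul_comm,
    ha, ha', hb, hb', hab.eq, hab'.eq, ha'b.eq, ha'b'.eq]
  module

namespace Matrix

open scoped MatrixOrder

variable {n 𝕜 : Type*} [Fintype n] [RCLike 𝕜]

theorem PosSemidef.trace_mul_nonneg {W P : Matrix n n 𝕜} (hW : W.PosSemidef)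
    (hP : P.PosSemidef) : 0 ≤ (W * P).trace := by
  obtain ⟨R, rfl⟩ : ∃ R, P = R * star R := by
    classical
    open scoped Matrix.Norms.L2Operator in
    exact CStarAlgebra.nonneg_iff_eq_mul_star_self.mp hP.nonneg
  rw [← mul_assoc, trace_mul_cycle]
  exact (hW.conjTranspose_mul_mul_same R).trace_nonneg

variable [DecidableEq n]

theorem PosSemidef.norm_trace_mul_le {W C : Matrix n n 𝕜} {c : ℝ} (hW : W.PosSemidef)
    (hC : C ≤ c • 1) (hC' : -C ≤ c • 1) : ‖(W * C).trace‖ ≤ c * RCLike.re W.trace := by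
  have h₁ := hW.trace_mul_nonneg hC
  have h₂ := hW.trace_mul_nonneg hC'
  rw [mul_sub, trace_sub, mul_smul_comm, mul_one, trace_smul, sub_nonneg] at h₁
  rw [mul_sub, trace_sub, mul_smul_comm, mul_one, trace_smul, mul_neg, trace_neg,
    sub_neg_eq_add] at h₂
  obtain ⟨-, hW_im⟩ := RCLike.nonneg_iff.mp hW.trace_nonneg
  -- The order on `𝕜` compares real parts and forces equal imaginary parts, so `Tr(WC)` is real.
  obtain ⟨h_re₁, h_im⟩ := RCLike.le_iff_re_im.mp h₁
  obtain ⟨h_re₂, -⟩ := RCLike.nonneg_iff.mp h₂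
  simp only [RCLike.smul_re, RCLike.smul_im, hW_im, mul_zero, map_add] at h_re₁ h_im h_re₂
  rw [← RCLike.re_add_im (W * C).trace, h_im, RCLike.ofReal_zero, zero_mul, add_zero,
    RCLike.norm_ofReal, abs_le]
  constructor <;> linarith

section Bell

variable {a a' b b' : Matrix n n 𝕜} (ha : a.IsHermitian) (ha' : a'.IsHermitian)
  (hb : b.IsHermitian) (hb' : b'.IsHermitian)
  (ha2 : a * a = 1) (ha'2 : a' * a' = 1) (hb2 : b * b = 1) (hb'2 : b' * b' = 1)
  (hab : Commute a b) (hab' : Commute a b') (ha'b : Commute a' b) (ha'b' : Commute a' b')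
include ha ha' hb hb' ha2 ha'2 hb2 hb'2 hab hab' ha'b ha'b'

theorem bellOperator_le_two_mul_sqrt_two : bellOperator a a' b b' ≤ (2 * √2) • 1 := by
  set X := √2 • a - b - b'
  set Y := √2 • a' - b + b'
  have hX : X.IsHermitian := ((ha.smul (.all _)).sub hb).sub hb'
  have hY : Y.IsHermitian := ((ha'.smul (.all _)).sub hb).add hb'
  have h_sq : (X * X + Y * Y).PosSemidef := by
    have := (posSemidef_conjTranspose_mul_self X).add (posSemidef_conjTranspose_mul_self Y)
    rwa [hX.eq, hY.eq] at this
  have h_sos := sum_sq_eq_sub_bellOperator √2 ha2 ha'2 hb2 hb'2 hab hab' ha'b ha'b'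
  have hc : (2 * √2 : ℝ) ≠ 0 := by positivity
  have h_coeff : (2 * √2)⁻¹ * (2 * √2 ^ 2 + 4) = 2 * √2 := by
    field_simp
    norm_num
  rw [le_iff]
  convert h_sq.smul (inv_nonneg.mpr (by positivity : (0 : ℝ) ≤ 2 * √2)) using 1
  rw [h_sos, smul_sub, smul_smul, smul_smul, h_coeff, inv_mul_cancel₀ hc, one_smul]

theorem neg_bellOperator_le_two_mul_sqrt_two : -bellOperator a a' b b' ≤ (2 * √2) • 1 := by
  rw [← bellOperator_neg_left]
  exact bellOperator_le_two_mul_sqrt_two ha.neg ha'.neg hb hb'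
    (by rwa [neg_mul_neg]) (by rwa [neg_mul_neg]) hb2 hb'2
    hab.neg_left hab'.neg_left ha'b.neg_left ha'b'.neg_left

theorem PosSemidef.norm_trace_mul_bellOperator_le {W : Matrix n n 𝕜} (hW : W.PosSemidef) :
    ‖(W * bellOperator a a' b b').trace‖ ≤ 2 * √2 * RCLike.re W.trace :=
  hW.norm_trace_mul_le
    (bellOperator_le_two_mul_sqrt_two ha ha' hb hb' ha2 ha'2 hb2 hb'2 hab hab' ha'b ha'b')
    (neg_bellOperator_le_two_mul_sqrt_two ha ha' hb hb' ha2 ha'2 hb2 hb'2 hab hab' ha'b ha'b')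

end Bell

end Matrix

theorem cirelson_bound
    (n : ℕ)
    (a a' b b' W : Matrix (Fin n) (Fin n) ℂ)
    (ha : a.IsHermitian) (ha' : a'.IsHermitian)
    (hb : b.IsHermitian) (hb' : b'.IsHermitian)
    (ha2 : a * a = 1) (ha'2 : a' * a' = 1)
    (hb2 : b * b = 1) (hb'2 : b' * b' = 1)
    (hab : Commute a b) (hab' : Commute a b')
    (ha'b : Commute a' b) (ha'b' : Commute a' b')
    (hW : W.PosSemidef) (hWtr : W.trace = 1) :
    ‖(W * (a * b + a * b' + a' * b - a' * b')).trace‖ ≤ 2 * Real.sqrt 2 := by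
  simpa [bellOperator, hWtr] using
    hW.norm_trace_mul_bellOperator_le ha ha' hb hb' ha2 ha'2 hb2 hb'2 hab hab' ha'b ha'b'
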